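/- For real numbers $x_1 > x_2 > 1$ and $p > 0$, the trigamma function satisfies $\psi^{(1)}(x_1) - \psi^{(1)}(x_2) < \psi^{(1)}(x_1+p) - \psi^{(1)}(x_2+p) < 0$. -/

import Mathlib

/-!
The digamma function `ψ` is monotone on `(0, ∞)` because `log ∘ Γ` is convex, and satisfies
`ψ(x + 1) = ψ(x) + 1/x`. The series `φ(x) = ∑ₙ (1/(n+1) - 1/(x+n))` has the same two properties
on `[1, ∞)`, so `ψ - φ` is 1-periodic there, and squeezing it between consecutive integers far out
shows that it is constant. Differentiating `φ` termwise gives `ψ'(x) = ∑ₙ 1/(x+n)²` for `x > 1`,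
and both inequalities hold term by term: `t ↦ 1/t²` is decreasing, and it is strictly convex, so
its increment over an interval of fixed length grows when the interval is shifted to the right.
-/

noncomputable def digamma (x : ℝ) : ℝ := deriv (fun y => Real.log (Real.Gamma y)) x

noncomputable def trigamma (x : ℝ) : ℝ := deriv digamma x

open Real Set Filter Topology

theorem StrictConvexOn.sub_lt_sub_add_add {s : Set ℝ} {f : ℝ → ℝ} (hf : StrictConvexOn ℝ s f)
    {a b p : ℝ} (ha : a ∈ s) (hbp : b + p ∈ s) (hab : a < b) (hp : 0 < p) :
    f b - f a < f (b + p) - f (a + p) := by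
  have hs : Icc a (b + p) ⊆ s := hf.1.ordConnected.out ha hbp
  have hb : b ∈ s := hs ⟨hab.le, by linarith⟩
  have hap : a + p ∈ s := hs ⟨by linarith, by linarith⟩
  have h₁ := hf.secant_strict_mono ha hb hbp hab.ne' (by linarith) (by linarith : b < b + p)
  have h₂ := hf.secant_strict_mono hbp ha hap (by linarith) (by linarith) (by linarith : a < a + p)
  rw [← neg_div_neg_eq, ← neg_div_neg_eq (f (a + p) - _), neg_sub, neg_sub, neg_sub, neg_sub,
    add_sub_add_right_eq_sub] at h₂
  exact (div_lt_div_iff_of_pos_right (sub_pos.mpr hab)).mp (h₁.trans h₂)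

theorem tsum_sub_succ_eq_of_tendsto {G : Type*} [AddCommGroup G] [TopologicalSpace G]
    [IsTopologicalAddGroup G] [T2Space G] {c : ℕ → G} {l : G}
    (hs : Summable fun n => c n - c (n + 1)) (hc : Tendsto c atTop (𝓝 l)) :
    ∑' n, (c n - c (n + 1)) = c 0 - l := by
  refine tendsto_nhds_unique hs.hasSum.tendsto_sum_nat ?_
  simpa only [Finset.sum_range_sub'] using tendsto_const_nhds.sub hc

theorem sub_eq_sub_one_of_monotoneOn_of_add_one {f g r : ℝ → ℝ} (hf : MonotoneOn f (Ici 1))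
    (hg : MonotoneOn g (Ici 1)) (hfr : ∀ x, 1 ≤ x → f (x + 1) = f x + r x)
    (hgr : ∀ x, 1 ≤ x → g (x + 1) = g x + r x) (hr : Tendsto r atTop (𝓝 0)) {x : ℝ}
    (hx : 1 ≤ x) : f x - g x = f 1 - g 1 := by
  have periodic : ∀ y, 1 ≤ y → ∀ m : ℕ, f (y + m) - g (y + m) = f y - g y := by
    intro y hy m
    induction m with
    | zero => simp
    | succ m ih =>
      have hym : 1 ≤ y + m := by linarith [m.cast_nonneg (α := ℝ)]
      rw [Nat.cast_succ, ← add_assoc, hfr _ hym, hgr _ hym]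
      linarith
  set k := ⌊x⌋₊
  have hk : 1 ≤ k := (Nat.one_le_floor_iff x).mpr hx
  have hkx : (k : ℝ) ≤ x := Nat.floor_le (by linarith)
  have hxk : x < k + 1 := Nat.lt_floor_add_one x
  have hk_one : f k - g k = f 1 - g 1 := by
    simpa [Nat.cast_sub hk] using periodic 1 le_rfl (k - 1)
  have bound : ∀ m : ℕ, |(f x - g x) - (f 1 - g 1)| ≤ r (k + m) := by
    intro m
    have hkm : (1 : ℝ) ≤ k + m := by
      have : (1 : ℝ) ≤ k := by exact_mod_cast hk
      linarith [m.cast_nonneg (α := ℝ)]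
    have hxm : (1 : ℝ) ≤ x + m := by linarith [m.cast_nonneg (α := ℝ)]
    have hf₁ := hf hkm hxm (by linarith)
    have hf₂ := hf hxm (by linarith : (1 : ℝ) ≤ k + m + 1) (by linarith)
    have hg₁ := hg hkm hxm (by linarith)
    have hg₂ := hg hxm (by linarith : (1 : ℝ) ≤ k + m + 1) (by linarith)
    rw [hfr _ hkm] at hf₂
    rw [hgr _ hkm] at hg₂
    have hx_shift := periodic x hx m
    have hk_shift := periodic k (by exact_mod_cast hk) m
    rw [abs_le]
    constructor <;> linarith
  have hlim : Tendsto (fun m : ℕ => r (k + m)) atTop (𝓝 0) :=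
    hr.comp (tendsto_atTop_add_const_left _ _ tendsto_natCast_atTop_atTop)
  exact sub_eq_zero.mp (abs_nonpos_iff.mp (ge_of_tendsto' hlim bound))

theorem strictConvexOn_inv_sq : StrictConvexOn ℝ (Ioi 0) fun t : ℝ => (t ^ 2)⁻¹ := by
  simpa using strictConvexOn_zpow (m := -2) (by norm_num) (by norm_num)

theorem summable_inv_add_sq {x : ℝ} (hx : 1 ≤ x) : Summable fun n : ℕ => ((x + n) ^ 2)⁻¹ := by
  have hone : Summable fun n : ℕ => ((n + 1 : ℝ) ^ 2)⁻¹ := by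
    simpa using (summable_nat_add_iff 1).mpr (Real.summable_nat_pow_inv.mpr one_lt_two)
  refine hone.of_nonneg_of_le (fun n => by positivity) fun n => ?_
  exact inv_anti₀ (by positivity) (pow_le_pow_left₀ (by positivity) (by linarith) 2)

/-- The Weierstrass series of `ψ + γ`. -/
noncomputable def digammaSeries (x : ℝ) : ℝ := ∑' n : ℕ, (((n : ℝ) + 1)⁻¹ - (x + n)⁻¹)

theorem summable_digammaSeries {x : ℝ} (hx : 1 ≤ x) :
    Summable fun n : ℕ => ((n : ℝ) + 1)⁻¹ - (x + n)⁻¹ := by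
  refine ((summable_inv_add_sq le_rfl).mul_left (x - 1)).of_nonneg_of_le (fun n => ?_) fun n => ?_
  · exact sub_nonneg.mpr (inv_anti₀ (by positivity) (by linarith))
  · calc ((n : ℝ) + 1)⁻¹ - (x + n)⁻¹ = (x - 1) / ((n + 1) * (x + n)) := by
          field_simp
          ring
      _ ≤ (x - 1) / ((1 + n) ^ 2) := by
          refine div_le_div_of_nonneg_left (by linarith) (by positivity) ?_
          nlinarith
      _ = (x - 1) * ((1 + n : ℝ) ^ 2)⁻¹ := div_eq_mul_inv _ _

theorem digammaSeries_monotoneOn : MonotoneOn digammaSeries (Ici 1) := by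
  intro a ha b hb hab
  refine Summable.tsum_le_tsum (fun n => ?_) (summable_digammaSeries ha) (summable_digammaSeries hb)
  have : 0 < a + n := by linarith [mem_Ici.mp ha, n.cast_nonneg (α := ℝ)]
  gcongr

theorem digammaSeries_add_one {x : ℝ} (hx : 1 ≤ x) :
    digammaSeries (x + 1) = digammaSeries x + x⁻¹ := by
  have hs₀ := summable_digammaSeries hx
  have hs₁ := summable_digammaSeries (by linarith : 1 ≤ x + 1)
  have hc : Tendsto (fun n : ℕ => (x + n)⁻¹) atTop (𝓝 0) :=
    tendsto_inv_atTop_zero.comp (tendsto_atTop_add_const_left _ x tendsto_natCast_atTop_atTop)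
  have htel := tsum_sub_succ_eq_of_tendsto ((hs₁.sub hs₀).congr fun n => by push_cast; ring) hc
  have hdiff : digammaSeries (x + 1) - digammaSeries x =
      ∑' n : ℕ, ((x + n)⁻¹ - (x + ↑(n + 1))⁻¹) := by
    rw [digammaSeries, digammaSeries, ← hs₁.tsum_sub hs₀]
    exact tsum_congr fun n => by push_cast; ring
  simp only [htel, Nat.cast_zero, add_zero, sub_zero] at hdiff
  linarith

theorem hasDerivAt_digammaSeries {x : ℝ} (hx : 1 < x) :
    HasDerivAt digammaSeries (∑' n : ℕ, ((x + n) ^ 2)⁻¹) x := by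
  have hderiv : ∀ (n : ℕ) (y : ℝ), y ∈ Ioi 1 →
      HasDerivAt (fun z : ℝ => ((n : ℝ) + 1)⁻¹ - (z + n)⁻¹) ((y + n) ^ 2)⁻¹ y := by
    intro n y hy
    have hy : y + n ≠ 0 := by linarith [mem_Ioi.mp hy, n.cast_nonneg (α := ℝ)]
    have h := (((hasDerivAt_id' y).add_const (n : ℝ)).inv hy).const_sub (((n : ℝ) + 1)⁻¹)
    rwa [neg_div, neg_neg, one_div] at h
  have hbound : ∀ (n : ℕ) (y : ℝ), y ∈ Ioi 1 → ‖((y + n) ^ 2)⁻¹‖ ≤ ((1 + n : ℝ) ^ 2)⁻¹ := by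
    intro n y hy
    have hy₀ : 0 ≤ y + n := by linarith [mem_Ioi.mp hy, n.cast_nonneg (α := ℝ)]
    rw [norm_inv, norm_pow, Real.norm_of_nonneg hy₀]
    gcongr
    exact (mem_Ioi.mp hy).le
  exact hasDerivAt_tsum_of_isPreconnected (summable_inv_add_sq le_rfl) isOpen_Ioi
    isPreconnected_Ioi hderiv hbound hx (summable_digammaSeries hx.le) hx

theorem differentiableAt_log_Gamma {x : ℝ} (hx : 0 < x) :
    DifferentiableAt ℝ (fun y => log (Gamma y)) x := by
  have hx' : ∀ m : ℕ, x ≠ -m := fun m => by linarith [m.cast_nonneg (α := ℝ)]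
  exact (differentiableAt_Gamma hx').log (Gamma_ne_zero hx')

theorem digamma_add_one {x : ℝ} (hx : 0 < x) : digamma (x + 1) = digamma x + x⁻¹ := by
  unfold digamma
  rw [← deriv_comp_add_const, ← Real.deriv_log,
    ← deriv_add (differentiableAt_log_Gamma hx) (differentiableAt_log hx.ne')]
  refine EventuallyEq.deriv_eq ?_
  filter_upwards [eventually_gt_nhds hx] with y hy
  rw [Gamma_add_one hy.ne', log_mul hy.ne' (Gamma_pos_of_pos hy).ne', add_comm]
  rfl

theorem digamma_monotoneOn : MonotoneOn digamma (Ioi 0) :=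
  convexOn_log_Gamma.monotoneOn_deriv fun _ hx => differentiableAt_log_Gamma hx

theorem digamma_sub_digammaSeries {x : ℝ} (hx : 1 ≤ x) :
    digamma x - digammaSeries x = digamma 1 - digammaSeries 1 :=
  sub_eq_sub_one_of_monotoneOn_of_add_one
    (digamma_monotoneOn.mono fun _ hy => mem_Ioi.mpr (zero_lt_one.trans_le hy))
    digammaSeries_monotoneOn (fun _ hy => digamma_add_one (zero_lt_one.trans_le hy))
    (fun _ hy => digammaSeries_add_one hy) tendsto_inv_atTop_zero hx

theorem trigamma_eq_tsum {x : ℝ} (hx : 1 < x) : trigamma x = ∑' n : ℕ, ((x + n) ^ 2)⁻¹ := by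
  have h : digamma =ᶠ[𝓝 x] fun y => digammaSeries y + (digamma 1 - digammaSeries 1) := by
    filter_upwards [eventually_gt_nhds hx] with y hy
    linarith [digamma_sub_digammaSeries hy.le]
  rw [trigamma, h.deriv_eq, deriv_add_const, (hasDerivAt_digammaSeries hx).deriv]

theorem trigamma_strictAntiOn : StrictAntiOn trigamma (Ioi 1) := by
  intro a ha b hb hab
  rw [trigamma_eq_tsum ha, trigamma_eq_tsum hb]
  have ha₀ : ∀ n : ℕ, 0 < a + n := fun n => by linarith [mem_Ioi.mp ha, n.cast_nonneg (α := ℝ)]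
  refine Summable.tsum_lt_tsum (i := 0) (fun n => ?_) ?_ (summable_inv_add_sq hb.le)
    (summable_inv_add_sq ha.le)
  · have := ha₀ n
    gcongr
  · have := ha₀ 0
    gcongr

theorem trigamma_sub_lt_trigamma_add_sub {a b p : ℝ} (ha : 1 < a) (hab : a < b) (hp : 0 < p) :
    trigamma b - trigamma a < trigamma (b + p) - trigamma (a + p) := by
  have hb : 1 < b := ha.trans hab
  have hsum : ∀ y : ℝ, 1 < y → Summable fun n : ℕ => ((y + n) ^ 2)⁻¹ :=
    fun y hy => summable_inv_add_sq hy.le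
  have hbp : 1 < b + p := by linarith
  have hap : 1 < a + p := by linarith
  rw [trigamma_eq_tsum ha, trigamma_eq_tsum hb, trigamma_eq_tsum hbp, trigamma_eq_tsum hap,
    ← (hsum b hb).tsum_sub (hsum a ha), ← (hsum _ hbp).tsum_sub (hsum _ hap)]
  have hterm : ∀ n : ℕ,
      ((b + n) ^ 2)⁻¹ - ((a + n) ^ 2)⁻¹ < ((b + p + n) ^ 2)⁻¹ - ((a + p + n) ^ 2)⁻¹ := by
    intro n
    have hn := n.cast_nonneg (α := ℝ)
    rw [add_right_comm b, add_right_comm a]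
    exact strictConvexOn_inv_sq.sub_lt_sub_add_add (mem_Ioi.mpr (by linarith))
      (mem_Ioi.mpr (by linarith)) (by linarith) hp
  exact Summable.tsum_lt_tsum (i := 0) (fun n => (hterm n).le) (hterm 0)
    ((hsum b hb).sub (hsum a ha)) ((hsum _ hbp).sub (hsum _ hap))

theorem stmt_2 (x₁ x₂ p : ℝ) (h12 : x₂ < x₁) (h2 : 1 < x₂) (hp : 0 < p) :
    trigamma x₁ - trigamma x₂ < trigamma (x₁ + p) - trigamma (x₂ + p) ∧
      trigamma (x₁ + p) - trigamma (x₂ + p) < 0 :=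
  ⟨trigamma_sub_lt_trigamma_add_sub h2 h12 hp,
    sub_neg.mpr (trigamma_strictAntiOn (mem_Ioi.mpr (by linarith)) (mem_Ioi.mpr (by linarith))
      (by linarith))⟩
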